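/- arXiv:2510.16278 — 4 statements merged into one kernel-verified Lean document; each statement's English description precedes it below -/
import Mathlib

section
/- Let w be a word in the alphabet of positive integers with content λ (i.e., the number of occurrences of i in w is λ_i, where λ is a partition). Then the insertion tableau P(w) obtained by column-inserting the letters of w into the empty tableau equals the canonical tableau C(λ) (the unique semistandard tableau of shape and content λ) if and only if w is a reverse lattice word (i.e., reading w from the end backwards to any position, the suffix contains at least as many i's as (i+1)'s for every i). -/
namespace KronRSK

/-- Column bumping: insert `x` into a strictly increasing column (read top to
bottom), displacing the topmost entry `≥ x`; returns the new column and the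
bumped entry (if any). -/
def bumpCol (x : ℕ) : List ℕ → List ℕ × Option ℕ
  | [] => ([x], none)
  | a :: l => if x ≤ a then (x :: l, some a) else
      let p := bumpCol x l; (a :: p.1, p.2)

/-- Column insertion of `x` into a tableau represented as its list of columns
(left to right). -/
def colInsert (x : ℕ) : List (List ℕ) → List (List ℕ)
  | [] => [[x]]
  | c :: rest =>
    match bumpCol x c with
    | (c', none) => c' :: rest
    | (c', some y) => c' :: colInsert y rest

/-- `P(w) = w₁ → ( ⋯ → (w_l → ∅) ⋯ )`: the tableau obtained by successively
column-inserting the letters of `w` into the empty tableau. -/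
def Pcol (w : List ℕ) : List (List ℕ) :=
  w.foldr (fun x T => colInsert x T) []

/-- Row bumping: insert `x` into a weakly increasing row, displacing the leftmost
entry `> x`. -/
def bumpRow (x : ℕ) : List ℕ → List ℕ × Option ℕ
  | [] => ([x], none)
  | a :: l => if x < a then (x :: l, some a) else
      let p := bumpRow x l; (a :: p.1, p.2)

/-- Row insertion of `x` into a tableau represented as its list of rows
(top to bottom). -/
def rowInsert (x : ℕ) : List (List ℕ) → List (List ℕ)
  | [] => [[x]]
  | row :: rest =>
    match bumpRow x row with
    | (row', none) => row' :: rest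
    | (row', some y) => row' :: rowInsert y rest

/-- `P(w) = (⋯(∅ ← w₁) ← ⋯ ) ← w_l`: the insertion tableau of `w` by row insertion. -/
def Prow (w : List ℕ) : List (List ℕ) :=
  w.foldl (fun T x => rowInsert x T) []

/-- The canonical tableau `C(λ)` of shape and content `λ` (length `p`),
as a list of columns: column `j` is `1, 2, …, λ'_j`. -/
def canoCols (lam : ℕ → ℕ) (p : ℕ) : List (List ℕ) :=
  (List.range (lam 0)).map (fun j => ((List.range p).filter (fun i => j < lam i)).map (· + 1))

/-- The canonical tableau `C(λ)` of shape and content `λ` (length `p`),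
as a list of rows: row `i` consists of `λ_i` copies of `i`. -/
def canoRows (lam : ℕ → ℕ) (p : ℕ) : List (List ℕ) :=
  (List.range p).map (fun i => List.replicate (lam i) (i + 1))

/-- `w` is a reverse lattice word: every suffix contains at least as many `i`s
as `(i+1)`s, for every `i ≥ 1`. -/
def RevLattice (w : List ℕ) : Prop :=
  ∀ k i, ((w.drop k).count (i + 2)) ≤ (w.drop k).count (i + 1)

/-- The bottom row of the two-line lexicographic array of the `p × q` matrix `B`:
for each row `i` (in order) and each column `j` (in order), the letter `j+1`
repeated `B i j` times. -/
def wordOf (B : ℕ → ℕ → ℕ) (p q : ℕ) : List ℕ :=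
  (List.range p).flatMap (fun i => (List.range q).flatMap (fun j => List.replicate (B i j) (j + 1)))

/-- The RSK insertion tableau `P` of the matrix `B`. -/
def PTab (B : ℕ → ℕ → ℕ) (p q : ℕ) : List (List ℕ) :=
  Prow (wordOf B p q)

/-- The RSK recording tableau `Q` of the matrix `B` (by the symmetry theorem for
RSK, it is the insertion tableau of the transposed matrix). -/
def QTab (B : ℕ → ℕ → ℕ) (p q : ℕ) : List (List ℕ) :=
  PTab (fun i j => B j i) q p

/-- 1-indexed access to the entries of the matrix `B` (0-indexed). -/
def b1 (B : ℕ → ℕ → ℕ) (i j : ℕ) : ℕ := B (i - 1) (j - 1)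


/-! A canonical tableau is a list of columns `[1, 2, …, h]` of weakly decreasing heights `h`.
Column-inserting `x + 1` into it sends the letter unchanged through every column of height
`> x` and appends it to the next column, so the result is canonical exactly when that column has
height `x` (or `x = 0` and a new column is started), i.e. exactly when the content stays a
partition. By induction along the word, `P(w)` is therefore canonical iff the content of every
suffix of `w` is a partition, which is the reverse lattice condition. The induction also needs
the converse step: a semistandard tableau that becomes canonical after one column insertion was
already canonical, because the inserted letter can only have bumped copies of itself. Finally
`P(w)` has the content of `w`, and a canonical tableau is determined by its content. -/

lemma getD_mem_of_lt {l : List ℕ} {i : ℕ} (h : i < l.length) : l.getD i 0 ∈ l := by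
  rw [List.getD_eq_getElem _ _ h]
  exact List.getElem_mem h

lemma getD_append_cons_of_ne {l₁ l₂ : List ℕ} {a b i : ℕ} (hi : i ≠ l₁.length) :
    (l₁ ++ a :: l₂).getD i 0 = (l₁ ++ b :: l₂).getD i 0 := by
  simp only [List.getD_eq_getElem?_getD, List.getElem?_append]
  split_ifs
  · rfl
  · obtain ⟨k, hk⟩ : ∃ k, i - l₁.length = k + 1 := ⟨i - l₁.length - 1, by omega⟩
    simp [hk]

lemma filter_range_eq_range_countP {P : ℕ → Bool} (hP : ∀ i j, i ≤ j → P j → P i) (p : ℕ) :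
    (List.range p).filter P = List.range ((List.range p).countP P) := by
  induction p with
  | zero => rfl
  | succ n ih =>
    rw [List.range_succ, List.filter_append, List.countP_append, ih]
    by_cases hn : P n
    · have hall : (List.range n).countP P = n :=
        (List.countP_eq_length.2 fun i hi => hP i n (List.mem_range.1 hi).le hn).trans
          List.length_range
      simp [hn, hall, List.range_succ]
    · simp [hn]

lemma bumpCol_eq_none {x : ℕ} {l l' : List ℕ} (h : bumpCol x l = (l', none)) :
    l' = l ++ [x] ∧ ∀ a ∈ l, a < x := by
  induction l generalizing l' with
  | nil => simp_all [bumpCol, eq_comm]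
  | cons a t ih =>
    by_cases hxa : x ≤ a
    · simp [bumpCol, hxa] at h
    · simp only [bumpCol, if_neg hxa, Prod.mk.injEq] at h
      obtain ⟨rfl, hsnd⟩ := h
      obtain ⟨e, hlt⟩ := ih (Prod.ext rfl hsnd)
      simp_all

lemma bumpCol_eq_some {x y : ℕ} {l l' : List ℕ} (h : bumpCol x l = (l', some y)) :
    ∃ l₁ l₂, l = l₁ ++ y :: l₂ ∧ l' = l₁ ++ x :: l₂ ∧ (∀ a ∈ l₁, a < x) ∧ x ≤ y := by
  induction l generalizing l' with
  | nil => simp [bumpCol] at h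
  | cons a t ih =>
    by_cases hxa : x ≤ a
    · simp only [bumpCol, if_pos hxa, Prod.mk.injEq, Option.some.injEq] at h
      obtain ⟨rfl, rfl⟩ := h
      exact ⟨[], t, rfl, rfl, by simp, hxa⟩
    · simp only [bumpCol, if_neg hxa, Prod.mk.injEq] at h
      obtain ⟨rfl, hsnd⟩ := h
      obtain ⟨l₁, l₂, rfl, e, hl₁, hxy⟩ := ih (Prod.ext rfl hsnd)
      refine ⟨a :: l₁, l₂, rfl, by simp [e], ?_, hxy⟩
      simp only [List.mem_cons, forall_eq_or_imp]
      exact ⟨by omega, hl₁⟩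

lemma bumpCol_of_forall_lt {x : ℕ} {l : List ℕ} (h : ∀ a ∈ l, a < x) :
    bumpCol x l = (l ++ [x], none) := by
  induction l with
  | nil => rfl
  | cons a t ih =>
    simp only [List.mem_cons, forall_eq_or_imp] at h
    simp [bumpCol, Nat.not_le.2 h.1, ih h.2]

lemma bumpCol_range'_of_mem {x s n : ℕ} (hs : s ≤ x) (hn : x < s + n) :
    bumpCol x (List.range' s n) = (List.range' s n, some x) := by
  induction n generalizing s with
  | zero => omega
  | succ n ih =>
    rw [List.range'_succ]
    by_cases hxs : x ≤ s
    · obtain rfl : x = s := by omega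
      simp [bumpCol]
    · simp [bumpCol, hxs, ih (s := s + 1) (by omega) (by omega)]

lemma pairwise_bumpCol_fst {x : ℕ} {c : List ℕ} (hc : c.Pairwise (· < ·)) :
    (bumpCol x c).1.Pairwise (· < ·) := by
  rcases hb : bumpCol x c with ⟨c', _ | y⟩
  · obtain ⟨rfl, hlt⟩ := bumpCol_eq_none hb
    simpa [List.pairwise_append] using ⟨hc, hlt⟩
  · obtain ⟨l₁, l₂, rfl, rfl, hl₁, hxy⟩ := bumpCol_eq_some hb
    simp only [List.pairwise_append, List.pairwise_cons, List.mem_cons] at hc ⊢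
    refine ⟨hc.1, ⟨fun b hb => hxy.trans_lt (hc.2.1.1 b hb), hc.2.1.2⟩, ?_⟩
    rintro a ha b (rfl | hb)
    · exact hl₁ a ha
    · exact hc.2.2 a ha b (Or.inr hb)

lemma headD_colInsert (x : ℕ) (T : List (List ℕ)) :
    (colInsert x T).headD [] = (bumpCol x (T.headD [])).1 := by
  cases T with
  | nil => rfl
  | cons c T =>
    simp only [colInsert, List.headD_cons]
    split <;> simp_all

lemma flatten_colInsert_perm (x : ℕ) (T : List (List ℕ)) :
    (colInsert x T).flatten.Perm (x :: T.flatten) := by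
  induction T generalizing x with
  | nil => simp [colInsert]
  | cons c T ih =>
    rcases hb : bumpCol x c with ⟨c', _ | y⟩
    · obtain ⟨rfl, -⟩ := bumpCol_eq_none hb
      simp [colInsert, hb, List.perm_middle]
    · obtain ⟨l₁, l₂, rfl, rfl, -⟩ := bumpCol_eq_some hb
      simp only [colInsert, hb, List.flatten_cons]
      refine ((ih y).append_left _).trans ?_
      simp only [List.perm_iff_count, List.count_append, List.count_cons]
      intro a
      omega

lemma flatten_Pcol_perm (w : List ℕ) : (Pcol w).flatten.Perm w := by
  induction w with
  | nil => rfl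
  | cons a w ih => exact (flatten_colInsert_perm a _).trans (ih.cons a)

/-- `ColPrecedes c d`: the column `c` may stand immediately left of `d` in a semistandard
tableau. -/
def ColPrecedes (c d : List ℕ) : Prop :=
  d.length ≤ c.length ∧ ∀ i < d.length, c.getD i 0 ≤ d.getD i 0

def IsTableau : List (List ℕ) → Prop
  | [] => True
  | c :: T => c ≠ [] ∧ c.Pairwise (· < ·) ∧ ColPrecedes c (T.headD []) ∧ IsTableau T

lemma colPrecedes_append_right {c d : List ℕ} (e : List ℕ) (h : ColPrecedes c d) :
    ColPrecedes (c ++ e) d := by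
  obtain ⟨hlen, hle⟩ := h
  refine ⟨by simp; omega, fun i hi => ?_⟩
  rw [List.getD_append _ _ _ _ (by omega)]
  exact hle i hi

lemma colPrecedes_bumpCol {x y : ℕ} {c c' d : List ℕ} (hcd : ColPrecedes c d)
    (hc : bumpCol x c = (c', some y)) : ColPrecedes c' (bumpCol y d).1 := by
  obtain ⟨l₁, l₂, rfl, rfl, hl₁, hxy⟩ := bumpCol_eq_some hc
  have hle : ∀ i, (l₁ ++ x :: l₂).getD i 0 ≤ (l₁ ++ y :: l₂).getD i 0 := by
    intro i
    by_cases hi : i = l₁.length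
    · subst hi
      simpa using hxy
    · exact (getD_append_cons_of_ne hi).le
  have hle_x : ∀ i ≤ l₁.length, (l₁ ++ x :: l₂).getD i 0 ≤ x := by
    intro i hi
    rcases hi.lt_or_eq with hi | rfl
    · rw [List.getD_append _ _ _ _ hi]
      exact (hl₁ _ (getD_mem_of_lt hi)).le
    · simp
  -- `y` enters `d` weakly above the row `l₁.length` it was bumped from, by the row condition
  have hrow : ∀ m₁ m₂ : List ℕ, d = m₁ ++ m₂ → (∀ a ∈ m₁, a < y) → m₁.length ≤ l₁.length := by
    rintro m₁ m₂ rfl hm₁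
    by_contra! hlt
    have h1 := hcd.2 l₁.length (by simp; omega)
    rw [List.getD_append _ _ _ _ hlt, List.getD_append_right _ _ _ _ le_rfl, Nat.sub_self,
      List.getD_cons_zero] at h1
    exact absurd (hm₁ _ (getD_mem_of_lt hlt)) (by omega)
  rcases hb : bumpCol y d with ⟨d', _ | z⟩
  · obtain ⟨rfl, hlt⟩ := bumpCol_eq_none hb
    have hd := hrow d [] (by simp) hlt
    refine ⟨by simp; omega, fun i hi => ?_⟩
    simp only [List.length_append, List.length_singleton] at hi
    rcases (Nat.lt_succ_iff.1 hi).lt_or_eq with hi | rfl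
    · rw [List.getD_append _ _ _ _ hi]
      exact (hle i).trans (hcd.2 i hi)
    · simpa using (hle_x _ hd).trans hxy
  · obtain ⟨m₁, m₂, rfl, rfl, hm₁, -⟩ := bumpCol_eq_some hb
    have hm := hrow m₁ (z :: m₂) rfl hm₁
    refine ⟨by simpa using hcd.1, fun i hi => ?_⟩
    by_cases him : i = m₁.length
    · subst him
      simpa using (hle_x _ hm).trans hxy
    · rw [getD_append_cons_of_ne (b := z) him]
      exact (hle i).trans (hcd.2 i (by simpa using hi))

lemma isTableau_colInsert {T : List (List ℕ)} (hT : IsTableau T) (x : ℕ) :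
    IsTableau (colInsert x T) := by
  induction T generalizing x with
  | nil => simp [colInsert, IsTableau, ColPrecedes]
  | cons c T ih =>
    obtain ⟨-, hc, hcd, hT⟩ := hT
    have hc' := pairwise_bumpCol_fst (x := x) hc
    rcases hb : bumpCol x c with ⟨c', _ | y⟩
    · obtain ⟨rfl, -⟩ := bumpCol_eq_none hb
      simp only [colInsert, hb, IsTableau]
      exact ⟨by simp, by simpa [hb] using hc', colPrecedes_append_right _ hcd, hT⟩
    · obtain ⟨l₁, l₂, -, rfl, -⟩ := bumpCol_eq_some hb
      simp only [colInsert, hb, IsTableau]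
      refine ⟨by simp, by simpa [hb] using hc', ?_, ih hT y⟩
      rw [headD_colInsert]
      exact colPrecedes_bumpCol hcd hb

lemma isTableau_Pcol (w : List ℕ) : IsTableau (Pcol w) := by
  induction w with
  | nil => trivial
  | cons a w ih => exact isTableau_colInsert ih a

lemma IsTableau.ne_nil {T : List (List ℕ)} (hT : IsTableau T) : ∀ c ∈ T, c ≠ [] := by
  induction T with
  | nil => simp
  | cons c T ih =>
    simp only [List.mem_cons, forall_eq_or_imp]
    exact ⟨hT.1, ih hT.2.2.2⟩

def canonicalCol (h : ℕ) : List ℕ := List.range' 1 h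

def IsCanonical (T : List (List ℕ)) : Prop :=
  ∃ H : List ℕ, H.Pairwise (· ≥ ·) ∧ T = H.map canonicalCol

lemma canonicalCol_eq_append_cons {l₁ l₂ : List ℕ} {x n : ℕ}
    (h : canonicalCol n = l₁ ++ x :: l₂) :
    l₁ = canonicalCol (x - 1) ∧ l₂ = List.range' (x + 1) (n - x) ∧ x ≤ n := by
  obtain ⟨k, hk, rfl, hx⟩ := List.range'_eq_append_iff.1 h
  obtain ⟨rfl, hpos, rfl⟩ := List.range'_eq_cons_iff.1 hx.symm
  refine ⟨by simp [canonicalCol], ?_, by omega⟩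
  congr 1
  omega

lemma colInsert_canonicalCol_cons_of_le {x h : ℕ} (hx : 1 ≤ x) (hxh : x ≤ h)
    (T : List (List ℕ)) : colInsert x (canonicalCol h :: T) = canonicalCol h :: colInsert x T := by
  simp [colInsert, canonicalCol, bumpCol_range'_of_mem hx (by omega : x < 1 + h)]

lemma colInsert_succ_canonicalCol_cons (x : ℕ) (T : List (List ℕ)) :
    colInsert (x + 1) (canonicalCol x :: T) = canonicalCol (x + 1) :: T := by
  have hlt : ∀ a ∈ canonicalCol x, a < x + 1 := by simp [canonicalCol]; omega
  simp only [colInsert, bumpCol_of_forall_lt hlt]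
  simp [canonicalCol, List.range'_concat, Nat.add_comm]

/-- The column that grows is the leftmost one of height `x`. -/
lemma exists_colInsert_succ_map_canonicalCol {x : ℕ} {H : List ℕ} (hH : H.Pairwise (· ≥ ·))
    (hx : x ∈ H ∨ x = 0) :
    ∃ H', colInsert (x + 1) (H.map canonicalCol) = H'.map canonicalCol ∧
      H'.Pairwise (· ≥ ·) ∧ H' ⊆ (x + 1) :: H := by
  induction H with
  | nil =>
    obtain rfl : x = 0 := by simpa using hx
    exact ⟨[1], rfl, by simp, by simp⟩
  | cons h H ih =>
    rw [List.pairwise_cons] at hH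
    by_cases hxh : x + 1 ≤ h
    · have hx' : x ∈ H ∨ x = 0 := by
        rcases hx with hx | hx
        · exact Or.inl ((List.mem_cons.1 hx).resolve_left (by omega))
        · exact Or.inr hx
      obtain ⟨H', hins, hH', hsub⟩ := ih hH.2 hx'
      refine ⟨h :: H', ?_, List.pairwise_cons.2 ⟨fun a ha => ?_, hH'⟩, ?_⟩
      · simp [colInsert_canonicalCol_cons_of_le (by omega) hxh, hins]
      · rcases List.mem_cons.1 (hsub ha) with rfl | ha
        exacts [hxh, hH.1 a ha]
      · exact List.cons_subset.2 ⟨by simp,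
          List.Subset.trans hsub (List.cons_subset_cons _ (List.subset_cons_self h H))⟩
    · obtain rfl : h = x := by
        rcases hx with hx | rfl
        · rcases List.mem_cons.1 hx with rfl | hx
          exacts [rfl, le_antisymm (by omega) (hH.1 x hx)]
        · omega
      refine ⟨(h + 1) :: H, colInsert_succ_canonicalCol_cons h _, ?_, by simp⟩
      exact List.pairwise_cons.2 ⟨fun a ha => by have := hH.1 a ha; omega, hH.2⟩

lemma forall_le_of_colPrecedes {k : ℕ} {H : List ℕ} (hH : H.Pairwise (· ≥ ·))
    (h : ColPrecedes (canonicalCol k) ((H.map canonicalCol).headD [])) : ∀ a ∈ H, a ≤ k := by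
  cases H with
  | nil => simp
  | cons h₀ H =>
    have hh₀ : h₀ ≤ k := by simpa [canonicalCol] using h.1
    rw [List.pairwise_cons] at hH
    simp only [List.mem_cons, forall_eq_or_imp]
    exact ⟨hh₀, fun a ha => (hH.1 a ha).trans hh₀⟩

lemma isCanonical_of_colInsert {T : List (List ℕ)} {x : ℕ} {H : List ℕ} (hT : IsTableau T)
    (hH : H.Pairwise (· ≥ ·)) (h : colInsert x T = H.map canonicalCol) : IsCanonical T := by
  induction T generalizing x H with
  | nil => exact ⟨[], List.Pairwise.nil, rfl⟩
  | cons c T ih =>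
    obtain ⟨-, hc, hcd, hT⟩ := hT
    obtain ⟨k, H, rfl⟩ : ∃ k H', H = k :: H' := by
      cases H with
      | nil => simp only [colInsert, List.map_nil] at h; split at h <;> simp at h
      | cons k H => exact ⟨k, H, rfl⟩
    rw [List.pairwise_cons] at hH
    rcases hb : bumpCol x c with ⟨c', _ | y⟩
    · obtain ⟨rfl, -⟩ := bumpCol_eq_none hb
      simp only [colInsert, hb, List.map_cons, List.cons.injEq] at h
      obtain ⟨hcx, rfl⟩ := h
      obtain ⟨rfl, -⟩ := canonicalCol_eq_append_cons hcx.symm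
      exact ⟨(x - 1) :: H, List.pairwise_cons.2 ⟨forall_le_of_colPrecedes hH.2 hcd, hH.2⟩, rfl⟩
    · obtain ⟨l₁, l₂, rfl, rfl, -, hxy⟩ := bumpCol_eq_some hb
      simp only [colInsert, hb, List.map_cons, List.cons.injEq] at h
      obtain ⟨hcx, hrest⟩ := h
      obtain ⟨H₀, hH₀, rfl⟩ := ih hT hH.2 hrest
      obtain ⟨-, hl₂, hxk⟩ := canonicalCol_eq_append_cons hcx.symm
      have hyx : y ≤ x := by
        cases l₂ with
        | nil =>
          have hy : y ∈ (H.map canonicalCol).flatten := by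
            rw [← hrest]
            exact (flatten_colInsert_perm y _).mem_iff.2 List.mem_cons_self
          simp only [List.mem_flatten, List.mem_map] at hy
          obtain ⟨_, ⟨a, ha, rfl⟩, hya⟩ := hy
          have := hH.1 a ha
          simp [canonicalCol] at hya hl₂
          omega
        | cons b l₂ =>
          obtain ⟨rfl, -⟩ := List.range'_eq_cons_iff.1 hl₂.symm
          simp only [List.pairwise_append, List.pairwise_cons] at hc
          exact Nat.le_of_lt_succ (hc.2.1.1 _ List.mem_cons_self)
      obtain rfl : y = x := le_antisymm hyx hxy
      refine ⟨k :: H₀, List.pairwise_cons.2 ⟨forall_le_of_colPrecedes hH₀ ?_, hH₀⟩, by simp [hcx]⟩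
      rwa [← hcx]

lemma count_flatten_map_canonicalCol (H : List ℕ) (i : ℕ) :
    (H.map canonicalCol).flatten.count (i + 1) = H.countP (fun h => i < h) := by
  induction H with
  | nil => rfl
  | cons h H ih =>
    simp only [List.map_cons, List.flatten_cons, List.count_append, ih, List.countP_cons]
    simp [canonicalCol, List.count_range', Nat.add_comm]

lemma succ_mem_of_countP_lt {H : List ℕ} {x : ℕ}
    (h : H.countP (fun h => x + 1 < h) < H.countP (fun h => x < h)) : x + 1 ∈ H := by
  by_contra hx
  refine h.not_ge (List.countP_mono_left fun a ha hxa => ?_)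
  simp only [decide_eq_true_eq] at hxa ⊢
  exact lt_of_le_of_ne hxa fun e => hx (e ▸ ha)

lemma revLattice_cons_iff {a : ℕ} {w : List ℕ} :
    RevLattice (a :: w) ↔ RevLattice w ∧ ∀ i, (a :: w).count (i + 2) ≤ (a :: w).count (i + 1) :=
  ⟨fun h => ⟨fun k i => by simpa using h (k + 1) i, fun i => by simpa using h 0 i⟩,
    fun ⟨h, h₀⟩ k i => by cases k <;> simp [h₀ i, h _ i]⟩

theorem isCanonical_Pcol_iff {w : List ℕ} (hw : ∀ x ∈ w, 0 < x) :
    IsCanonical (Pcol w) ↔ RevLattice w := by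
  induction w with
  | nil => exact ⟨fun _ k i => by simp, fun _ => ⟨[], .nil, rfl⟩⟩
  | cons a w ih =>
    rw [revLattice_cons_iff, ← ih fun x hx => hw x (List.mem_cons_of_mem a hx)]
    have hcount : ∀ n, (a :: w).count n = (a :: (Pcol w).flatten).count n := fun n =>
      (((flatten_Pcol_perm w).cons a).count_eq n).symm
    change IsCanonical (colInsert a (Pcol w)) ↔ _
    constructor
    · rintro ⟨H, hH, hPH⟩
      refine ⟨isCanonical_of_colInsert (isTableau_Pcol w) hH hPH, fun i => ?_⟩
      simp only [hcount, ← (flatten_colInsert_perm a _).count_eq, hPH,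
        count_flatten_map_canonicalCol]
      exact List.countP_mono_left fun h _ hh => by simp at hh ⊢; omega
    · rintro ⟨⟨H, hH, hPH⟩, hlat⟩
      obtain ⟨x, rfl⟩ : ∃ x, a = x + 1 := Nat.exists_eq_add_one.2 (hw a List.mem_cons_self)
      have hx : x ∈ H ∨ x = 0 := by
        rcases x with _ | x
        · exact Or.inr rfl
        refine Or.inl (succ_mem_of_countP_lt ?_)
        have := hlat x
        simp [hcount, hPH, count_flatten_map_canonicalCol] at this
        omega
      obtain ⟨H', hins, hH', -⟩ := exists_colInsert_succ_map_canonicalCol hH hx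
      exact ⟨H', hH', hPH ▸ hins⟩

lemma lt_countP_iff_lt_getD {H : List ℕ} (hH : H.Pairwise (· ≥ ·)) (i j : ℕ) :
    j < H.countP (fun h => i < h) ↔ i < H.getD j 0 := by
  induction H generalizing j with
  | nil => simp
  | cons h H ih =>
    rw [List.pairwise_cons] at hH
    by_cases hih : i < h
    · cases j with
      | zero => simp [hih]
      | succ j => simp [hih, ih hH.2]
    · have hzero : H.countP (fun h => i < h) = 0 :=
        List.countP_eq_zero.2 fun a ha => by have := hH.1 a ha; simp; omega
      cases j with
      | zero => simp [hih, hzero]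
      | succ j =>
        have hle : H.getD j 0 ≤ h := by
          rcases lt_or_ge j H.length with hj | hj
          · exact hH.1 _ (getD_mem_of_lt hj)
          · rw [List.getD_eq_default _ _ hj]
            exact Nat.zero_le _
        simp [hzero, hih] at hle ⊢
        omega

lemma isCanonical_canoCols {lam : ℕ → ℕ} (hdec : ∀ i j, i ≤ j → lam j ≤ lam i) (p : ℕ) :
    IsCanonical (canoCols lam p) := by
  refine ⟨(List.range (lam 0)).map fun j => (List.range p).countP fun i => j < lam i, ?_, ?_⟩
  · refine List.pairwise_map.2 (List.pairwise_lt_range.imp fun {j j'} hjj' => ?_)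
    exact List.countP_mono_left fun i _ hi => by simp at hi ⊢; omega
  · simp only [canoCols, List.map_map]
    refine List.map_congr_left fun j _ => ?_
    have hdown : ∀ i i', i ≤ i' → decide (j < lam i') → decide (j < lam i) := by
      simp only [decide_eq_true_eq]
      exact fun i i' hii' h => h.trans_le (hdec _ _ hii')
    rw [filter_range_eq_range_countP hdown, Function.comp_apply, canonicalCol,
      List.range'_eq_map_range]
    simp only [Nat.add_comm]

lemma canoCols_countP {H : List ℕ} {p : ℕ} (hH : H.Pairwise (· ≥ ·)) (hpos : ∀ h ∈ H, 0 < h)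
    (hp : ∀ h ∈ H, h ≤ p) :
    canoCols (fun i => H.countP fun h => i < h) p = H.map canonicalCol := by
  have hlen : H.countP (fun h => 0 < h) = H.length :=
    List.countP_eq_length.2 (by simpa using hpos)
  refine List.ext_getElem (by simp [canoCols, hlen]) fun j _ hj => ?_
  have hjH : j < H.length := by simpa using hj
  simp only [canoCols, List.getElem_map, List.getElem_range]
  have hdown : ∀ i i', i ≤ i' → decide (j < H.countP fun h => i' < h) →
      decide (j < H.countP fun h => i < h) := fun i i' hii' h => by
    simp only [decide_eq_true_eq] at h ⊢
    exact h.trans_le (List.countP_mono_left fun a _ ha => by simp at ha ⊢; omega)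
  have hk : (List.range p).countP (fun i => j < H.countP fun h => i < h) = H[j] := by
    refine eq_of_forall_lt_iff fun i => ?_
    rw [← List.mem_range, ← filter_range_eq_range_countP hdown]
    simp only [List.mem_filter, List.mem_range, decide_eq_true_eq, lt_countP_iff_lt_getD hH,
      List.getD_eq_getElem _ _ hjH]
    have := hp _ (List.getElem_mem hjH)
    omega
  rw [filter_range_eq_range_countP hdown, hk, canonicalCol, List.range'_eq_map_range]
  simp only [Nat.add_comm]

/-- for a word `w` of content `λ` (a partition of length `p`), the
column-insertion tableau `P(w)` is the canonical tableau `C(λ)` iff `w` is a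
reverse lattice word. -/
theorem Pcol_eq_cano_iff_revLattice (p : ℕ) (lam : ℕ → ℕ) (w : List ℕ)
    (hdec : ∀ i j, i ≤ j → lam j ≤ lam i)
    (hlen : (∀ i, i < p → 0 < lam i) ∧ ∀ i, p ≤ i → lam i = 0)
    (hposw : ∀ x ∈ w, 0 < x)
    (hcont : ∀ i, w.count (i + 1) = lam i) :
    Pcol w = canoCols lam p ↔ RevLattice w := by
  rw [← isCanonical_Pcol_iff hposw]
  refine ⟨fun h => h ▸ isCanonical_canoCols hdec p, fun ⟨H, hH, hPH⟩ => ?_⟩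
  have hlam : lam = fun i => H.countP fun h => i < h := funext fun i => by
    rw [← hcont, ← (flatten_Pcol_perm w).count_eq, hPH, count_flatten_map_canonicalCol]
  have hpos : ∀ h ∈ H, 0 < h := fun h hh => by
    have := (isTableau_Pcol w).ne_nil _ (hPH ▸ List.mem_map_of_mem hh)
    simpa [canonicalCol, Nat.pos_iff_ne_zero] using this
  have hp : ∀ h ∈ H, h ≤ p := fun h hh => by
    by_contra! hph
    have hzero := hlen.2 p le_rfl
    rw [hlam] at hzero
    exact List.countP_eq_zero.1 hzero h hh (by simpa using hph)
  rw [hPH, hlam, canoCols_countP hH hpos hp]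

end KronRSK
end

section
/- If χ^ν is a maximal component (in the dominance order) of χ^λ ⊗ χ^μ — i.e., g(λ,μ,ν) > 0 and g(λ,μ,γ) = 0 for every partition γ strictly dominating ν — then g(λ,μ,ν) = lr(λ,μ;ν) = ⟨χ^λ ⊗ χ^μ, φ^ν⟩. -/
/-! The Jacobi–Trudi expansion writes `χ^ν` as `φ^ν` plus a signed sum of permutation characters
`φ^a` with `a = (ν_i - i + σ(i))_i`, `σ ≠ 1`. Such an `a` either has a negative entry (and the term
vanishes) or sorts to a partition strictly dominating `ν`: the prefix sums of `σ` dominate those of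
the identity, and sorting decreasingly only increases prefix sums. By induction along dominance,
`φ^ν - χ^ν` is therefore an integer combination of characters `χ^γ` with `γ` strictly dominating
`ν`, so any additive functional killing those, such as `⟨χ^λ ⊗ χ^μ, -⟩` at a maximal component,
takes the same value on `φ^ν` and on `χ^ν`. -/

open Finset

namespace Kron

open scoped Classical

abbrev Sym (n : ℕ) := Equiv.Perm (Fin n)

/-- The permutation character `φ^α` of `S_n` for a composition `α` with `r` parts:
`φ^α(g)` is the number of `g`-invariant functions `f : [n] → [r]` whose fiber over `k`
has `α k` elements (i.e. ordered set partitions of type `α` fixed by `g`). -/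
noncomputable def permChar (n r : ℕ) (α : Fin r → ℕ) (g : Sym n) : ℤ :=
  ((Finset.univ : Finset (Fin n → Fin r)).filter
    (fun f => (∀ x, f (g x) = f x) ∧
      ∀ k : Fin r, (Finset.univ.filter (fun x => f x = k)).card = α k)).card

/-- `φ^α` for an integer vector `α`, equal to `0` if some coordinate is negative. -/
noncomputable def permCharZ (n : ℕ) (α : Fin n → ℤ) (g : Sym n) : ℤ :=
  if ∀ k, 0 ≤ α k then permChar n n (fun k => (α k).toNat) g else 0

/-- The irreducible character `χ^λ` of `S_n`, via the Jacobi-Trudi determinant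
`χ^λ = ∑_{σ} sgn(σ) φ^{(λ_i - i + σ(i))_i}`. -/
noncomputable def irrChar (n : ℕ) (lam : ℕ → ℕ) (g : Sym n) : ℤ :=
  ∑ σ : Sym n, (Equiv.Perm.sign σ : ℤ) *
    permCharZ n (fun i => (lam (i : ℕ) : ℤ) - (i : ℤ) + ((σ i : ℕ) : ℤ)) g

/-- Inner product of (integer-valued) class functions on `S_n`. -/
noncomputable def innerChar (n : ℕ) (f h : Sym n → ℤ) : ℚ :=
  (∑ g : Sym n, (f g : ℚ) * (h g : ℚ)) / (Nat.factorial n : ℚ)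

/-- The Kronecker coefficient `g(λ,μ,ν) = ⟨χ^λ ⊗ χ^μ, χ^ν⟩`. -/
noncomputable def kron (n : ℕ) (lam mu nu : ℕ → ℕ) : ℚ :=
  innerChar n (fun g => irrChar n lam g * irrChar n mu g) (irrChar n nu)

/-- `lr(λ,μ;τ) = ⟨χ^λ ⊗ χ^μ, φ^τ⟩` for a composition `τ` with `r` parts. -/
noncomputable def lrCoeff (n r : ℕ) (lam mu : ℕ → ℕ) (τ : Fin r → ℕ) : ℚ :=
  innerChar n (fun g => irrChar n lam g * irrChar n mu g) (permChar n r τ)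

/-- `lr(λ,μ;γ)` for `γ` given as a function `ℕ → ℕ` (padded with zeros to `n` parts;
adding zero parts does not change the permutation character). -/
noncomputable def lrN (n : ℕ) (lam mu γ : ℕ → ℕ) : ℚ :=
  lrCoeff n n lam mu (fun k => γ (k : ℕ))

/-- `λ` is a partition of `n`: weakly decreasing, supported on the first `n` parts,
with total size `n`. -/
def IsPartition (n : ℕ) (lam : ℕ → ℕ) : Prop :=
  (∀ i j, i ≤ j → lam j ≤ lam i) ∧ (∀ i, n ≤ i → lam i = 0) ∧ ∑ i ∈ range n, lam i = n

/-- `λ` has length (number of positive parts) `p`. -/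
def HasLength (lam : ℕ → ℕ) (p : ℕ) : Prop :=
  (∀ i, i < p → 0 < lam i) ∧ ∀ i, p ≤ i → lam i = 0

/-- Dominance order: `γ ⊵ ν`. -/
def Dominates (γ ν : ℕ → ℕ) : Prop :=
  ∀ k, ∑ i ∈ range k, ν i ≤ ∑ i ∈ range k, γ i

theorem Dominates.trans {a b c : ℕ → ℕ} (hab : Dominates a b) (hbc : Dominates b c) :
    Dominates a c :=
  fun k => (hbc k).trans (hab k)

theorem Dominates.antisymm {γ ν : ℕ → ℕ} (hγν : Dominates γ ν) (hνγ : Dominates ν γ) :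
    γ = ν := by
  funext i
  have hsum k : ∑ j ∈ range k, γ j = ∑ j ∈ range k, ν j := le_antisymm (hνγ k) (hγν k)
  have := hsum (i + 1)
  rw [sum_range_succ, sum_range_succ, hsum i] at this
  omega

section Partition

variable {n : ℕ} {γ ν : ℕ → ℕ}

theorem IsPartition.sum_range_of_le (hν : IsPartition n ν) {k : ℕ} (hk : n ≤ k) :
    ∑ i ∈ range k, ν i = n := by
  obtain ⟨-, hzero, hsum⟩ := hν
  rw [← sum_range_add_sum_Ico _ hk, hsum, sum_eq_zero fun i hi => hzero i (mem_Ico.1 hi).1]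
  rfl

theorem IsPartition.sum_range_le (hν : IsPartition n ν) (k : ℕ) : ∑ i ∈ range k, ν i ≤ n := by
  rcases le_total k n with hk | hk
  · exact hν.2.2 ▸ sum_le_sum_of_subset (range_subset_range.2 hk)
  · exact (hν.sum_range_of_le hk).le

def dominanceRank (n : ℕ) (ν : ℕ → ℕ) : ℕ :=
  ∑ k ∈ range (n + 1), ∑ i ∈ range k, ν i

theorem IsPartition.dominanceRank_le (hν : IsPartition n ν) : dominanceRank n ν ≤ n * (n + 1) :=
  (sum_le_card_nsmul _ _ _ fun k _ => hν.sum_range_le k).trans_eq (by simp [mul_comm])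

theorem dominanceRank_lt (hγ : IsPartition n γ) (hν : IsPartition n ν) (hγν : Dominates γ ν)
    (hne : γ ≠ ν) : dominanceRank n ν < dominanceRank n γ := by
  refine sum_lt_sum (fun k _ => hγν k) ?_
  by_contra! hle
  refine hne (hγν.antisymm fun k => ?_)
  rcases lt_or_ge k (n + 1) with hk | hk
  · exact hle k (mem_range.2 hk)
  · rw [hγ.sum_range_of_le (by omega), hν.sum_range_of_le (by omega)]

@[elab_as_elim]
theorem IsPartition.induction_on_dominance {P : (ℕ → ℕ) → Prop}
    (step : ∀ ν, IsPartition n ν →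
      (∀ γ, IsPartition n γ → Dominates γ ν → γ ≠ ν → P γ) → P ν)
    (hν : IsPartition n ν) : P ν := by
  induction hm : n * (n + 1) - dominanceRank n ν using Nat.strong_induction_on
    generalizing ν with
  | _ m ih =>
    refine step ν hν fun γ hγ hγν hne => ih _ ?_ hγ rfl
    have := dominanceRank_lt hγ hν hγν hne
    have := hγ.dominanceRank_le
    omega

end Partition

def pad (n : ℕ) (f : Fin n → ℕ) : ℕ → ℕ :=
  fun i => if h : i < n then f ⟨i, h⟩ else 0

section Pad

variable {n : ℕ}

@[simp]
theorem pad_val (f : Fin n → ℕ) (i : Fin n) : pad n f i = f i := by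
  simp [pad]

theorem sum_range_pad (f : Fin n → ℕ) (k : ℕ) :
    ∑ i ∈ range k, pad n f i = ∑ i : Fin n with i.val < k, f i := by
  rw [sum_filter, sum_fin_eq_sum_range, ← sum_range_add_sum_Ico _ (min_le_left k n),
    ← sum_range_add_sum_Ico _ (min_le_right k n)]
  congr 1
  · refine sum_congr rfl fun i hi => ?_
    simp only [mem_range] at hi
    simp [pad, show i < n by omega, show i < k by omega]
  · rw [sum_eq_zero, sum_eq_zero] <;> intro i hi <;> simp only [mem_Ico] at hi
    · simp [show ¬i < k by omega]
    · simp [pad, show ¬i < n by omega]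

theorem dominates_pad_iff {f g : Fin n → ℕ} :
    Dominates (pad n f) (pad n g) ↔
      ∀ k, ∑ i : Fin n with i.val < k, g i ≤ ∑ i : Fin n with i.val < k, f i := by
  simp only [Dominates, sum_range_pad]

theorem IsPartition.pad_eq {ν : ℕ → ℕ} (hν : IsPartition n ν) : pad n (fun i => ν i) = ν := by
  funext i
  by_cases hi : i < n
  · simp [pad, hi]
  · simp [pad, hi, hν.2.1 i (by omega)]

theorem isPartition_pad {f : Fin n → ℕ} (hf : Antitone f) (hsum : ∑ i, f i = n) :
    IsPartition n (pad n f) := by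
  refine ⟨fun i j hij => ?_, fun i hi => by simp [pad, show ¬i < n by omega], ?_⟩
  · by_cases hj : j < n
    · have hi : i < n := hij.trans_lt hj
      simpa [pad, hj, hi] using hf (show (⟨i, hi⟩ : Fin n) ≤ ⟨j, hj⟩ from hij)
    · simp [pad, hj]
  · rw [sum_range_pad, filter_true_of_mem fun i _ => i.isLt, hsum]

end Pad

section Rearrangement

variable {n : ℕ}

theorem antitone_boole_val_lt (k : ℕ) :
    Antitone fun i : Fin n => if i.val < k then 1 else 0 := by
  intro i j hij
  dsimp only
  split_ifs <;> omega

theorem sum_filter_val_lt_comp_perm_le {b : Fin n → ℕ} (hb : Antitone b)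
    (π : Equiv.Perm (Fin n)) (k : ℕ) :
    ∑ i : Fin n with i.val < k, b (π i) ≤ ∑ i : Fin n with i.val < k, b i := by
  simpa only [sum_filter, boole_mul] using
    ((antitone_boole_val_lt k).monovary hb).sum_mul_comp_perm_le_sum_mul (σ := π)

theorem sum_filter_val_lt_le_comp_perm {b : Fin n → ℕ} (hb : Monotone b)
    (π : Equiv.Perm (Fin n)) (k : ℕ) :
    ∑ i : Fin n with i.val < k, b i ≤ ∑ i : Fin n with i.val < k, b (π i) := by
  simpa only [sum_filter, boole_mul] using
    ((antitone_boole_val_lt k).antivary hb).sum_mul_le_sum_mul_comp_perm (σ := π)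

theorem exists_perm_antitone_comp {α : Type*} [LinearOrder α] (f : Fin n → α) :
    ∃ π : Equiv.Perm (Fin n), Antitone (f ∘ π) :=
  ⟨Fin.revPerm.trans (Tuple.sort f), fun _ _ hij => Tuple.monotone_sort f (Fin.rev_le_rev.2 hij)⟩

end Rearrangement

section JacobiTrudi

variable {n : ℕ}

def jacobiTrudiIndex (ν : ℕ → ℕ) (σ : Sym n) : Fin n → ℤ :=
  fun i => (ν (i : ℕ) : ℤ) - (i : ℤ) + ((σ i : ℕ) : ℤ)

theorem irrChar_eq_sum (ν : ℕ → ℕ) :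
    irrChar n ν = ∑ σ : Sym n, (Equiv.Perm.sign σ : ℤ) • permCharZ n (jacobiTrudiIndex ν σ) := by
  funext g
  simp only [irrChar, Finset.sum_apply, Pi.smul_apply, smul_eq_mul]
  rfl

theorem permCharZ_jacobiTrudiIndex_one (ν : ℕ → ℕ) :
    permCharZ n (jacobiTrudiIndex ν 1) = permChar n n fun k => ν k := by
  funext g
  simp [permCharZ, jacobiTrudiIndex]

theorem permCharZ_of_not_nonneg {α : Fin n → ℤ} (hα : ¬∀ k, 0 ≤ α k) : permCharZ n α = 0 :=
  funext fun _ => if_neg hα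

theorem permChar_comp_perm {r : ℕ} (α : Fin r → ℕ) (π : Equiv.Perm (Fin r)) :
    permChar n r (α ∘ π) = permChar n r α := by
  funext g
  unfold permChar
  congr 1
  refine card_nbij' (π ∘ ·) (π.symm ∘ ·) ?_ ?_ (fun f _ => by ext; simp) (fun f _ => by ext; simp)
  · simp only [coe_filter, mem_univ, true_and]
    rintro f ⟨hg, hfiber⟩
    refine ⟨fun x => by simp [hg], fun k => ?_⟩
    simpa [← Equiv.eq_symm_apply] using hfiber (π.symm k)
  · simp only [coe_filter, mem_univ, true_and]
    rintro f ⟨hg, hfiber⟩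
    refine ⟨fun x => by simp [hg], fun k => ?_⟩
    simpa [Equiv.symm_apply_eq] using hfiber (π k)

theorem IsPartition.sum_jacobiTrudiIndex {ν : ℕ → ℕ} (hν : IsPartition n ν) (σ : Sym n) :
    ∑ i, jacobiTrudiIndex ν σ i = n := by
  simp only [jacobiTrudiIndex, sum_add_distrib, sum_sub_distrib,
    Equiv.sum_comp σ fun i : Fin n => ((i : ℕ) : ℤ)]
  rw [Fin.sum_univ_eq_sum_range (fun i => (ν i : ℤ)), sub_add_cancel]
  exact_mod_cast hν.2.2

theorem dominates_pad_jacobiTrudiIndex {ν : ℕ → ℕ} (hν : IsPartition n ν) (σ : Sym n)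
    {α : Fin n → ℕ} (hα : ∀ i, (α i : ℤ) = jacobiTrudiIndex ν σ i) :
    Dominates (pad n α) ν := by
  rw [← hν.pad_eq]
  refine dominates_pad_iff.2 fun k => ?_
  have hσ : (∑ i : Fin n with i.val < k, ((i : ℕ) : ℤ)) ≤
      ∑ i : Fin n with i.val < k, ((σ i : ℕ) : ℤ) := by
    exact_mod_cast sum_filter_val_lt_le_comp_perm (b := Fin.val) (fun _ _ h => h) σ k
  have hsum : (∑ i : Fin n with i.val < k, α i : ℤ) =
      ∑ i : Fin n with i.val < k, (ν i : ℤ) - ∑ i : Fin n with i.val < k, ((i : ℕ) : ℤ) +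
        ∑ i : Fin n with i.val < k, ((σ i : ℕ) : ℤ) := by
    simp only [hα, jacobiTrudiIndex, sum_add_distrib, sum_sub_distrib]
  suffices (∑ i : Fin n with i.val < k, (ν i : ℤ)) ≤ ∑ i : Fin n with i.val < k, (α i : ℤ) by
    exact_mod_cast this
  linarith

theorem exists_dominating_of_jacobiTrudiIndex {ν : ℕ → ℕ} (hν : IsPartition n ν) {σ : Sym n}
    (hσ : σ ≠ 1) (hnonneg : ∀ i, 0 ≤ jacobiTrudiIndex ν σ i) :
    ∃ γ, IsPartition n γ ∧ Dominates γ ν ∧ γ ≠ ν ∧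
      permCharZ n (jacobiTrudiIndex ν σ) = permChar n n fun k => γ k := by
  set α : Fin n → ℕ := fun i => (jacobiTrudiIndex ν σ i).toNat
  have hα i : (α i : ℤ) = jacobiTrudiIndex ν σ i := Int.toNat_of_nonneg (hnonneg i)
  obtain ⟨π, hπ⟩ := exists_perm_antitone_comp α
  have hdom : Dominates (pad n α) ν := dominates_pad_jacobiTrudiIndex hν σ hα
  have hsort : Dominates (pad n (α ∘ π)) (pad n α) := dominates_pad_iff.2 fun k => by
    simpa using sum_filter_val_lt_comp_perm_le hπ π.symm k
  have hsum : ∑ i, (α ∘ π) i = n := by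
    rw [Function.comp_def, Equiv.sum_comp π α]
    have : ((∑ i, α i : ℕ) : ℤ) = n := by
      push_cast [hα]
      exact hν.sum_jacobiTrudiIndex σ
    exact_mod_cast this
  refine ⟨pad n (α ∘ π), isPartition_pad hπ hsum, hsort.trans hdom, fun h => hσ ?_, ?_⟩
  · have hαν : pad n α = ν := hdom.antisymm (h ▸ hsort)
    ext i
    have := hα i
    rw [jacobiTrudiIndex, ← congrFun hαν i, pad_val] at this
    simp only [Equiv.Perm.one_apply]
    omega
  · rw [show (fun k : Fin n => pad n (α ∘ π) k) = α ∘ π from funext fun k => pad_val _ k,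
      permChar_comp_perm]
    funext g
    exact if_pos hnonneg

end JacobiTrudi

theorem map_permChar_eq_map_irrChar {n : ℕ} {M : Type*} [AddCommGroup M]
    (L : (Sym n → ℤ) →+ M) {ν : ℕ → ℕ} (hν : IsPartition n ν)
    (hL : ∀ γ, IsPartition n γ → Dominates γ ν → γ ≠ ν → L (irrChar n γ) = 0) :
    L (permChar n n fun k => ν k) = L (irrChar n ν) := by
  revert hL
  refine IsPartition.induction_on_dominance (fun ν hν ih hL => ?_) hν
  have hperm γ (hγ : IsPartition n γ) (hγν : Dominates γ ν) (hne : γ ≠ ν) :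
      L (permChar n n fun k => γ k) = 0 := by
    refine (ih γ hγ hγν hne fun δ hδ hδγ _ => hL δ hδ (hδγ.trans hγν) ?_).trans
      (hL γ hγ hγν hne)
    rintro rfl
    exact hne (hγν.antisymm hδγ)
  rw [irrChar_eq_sum, map_sum, sum_eq_single 1]
  · simp [permCharZ_jacobiTrudiIndex_one]
  · intro σ _ hσ
    by_cases hnonneg : ∀ i, 0 ≤ jacobiTrudiIndex ν σ i
    · obtain ⟨γ, hγ, hγν, hne, hφ⟩ := exists_dominating_of_jacobiTrudiIndex hν hσ hnonneg
      rw [map_zsmul, hφ, hperm γ hγ hγν hne, smul_zero]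
    · rw [permCharZ_of_not_nonneg hnonneg, smul_zero, map_zero]
  · simp

noncomputable def innerCharAddHom (n : ℕ) (f : Sym n → ℤ) : (Sym n → ℤ) →+ ℚ :=
  AddMonoidHom.mk' (innerChar n f) fun h h' => by
    simp only [innerChar, Pi.add_apply, Int.cast_add, mul_add, sum_add_distrib, add_div]

theorem kron_of_maximal_component_general (n : ℕ) (lam mu nu : ℕ → ℕ)
    (hnu : IsPartition n nu)
    (hmax : ∀ γ : ℕ → ℕ, IsPartition n γ → Dominates γ nu → γ ≠ nu →
      kron n lam mu γ = 0) :
    kron n lam mu nu = lrN n lam mu nu :=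
  (map_permChar_eq_map_irrChar (innerCharAddHom n _) hnu hmax).symm

/-- if `χ^ν` is a maximal component of `χ^λ ⊗ χ^μ` in the dominance
order, then `g(λ,μ,ν) = lr(λ,μ;ν)`. -/
theorem kron_of_maximal_component (n : ℕ) (lam mu nu : ℕ → ℕ)
    (hlam : IsPartition n lam) (hmu : IsPartition n mu) (hnu : IsPartition n nu)
    (hpos : 0 < kron n lam mu nu)
    (hmax : ∀ γ : ℕ → ℕ, IsPartition n γ → Dominates γ nu → γ ≠ nu →
      kron n lam mu γ = 0) :
    kron n lam mu nu = lrN n lam mu nu :=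
  kron_of_maximal_component_general n lam mu nu hnu hmax

end Kron
end

section
/- Suppose p ≤ q. For any X in the column-row cone CR(p,q,r), the first level matrix X^{(1)} = (x_{i,j}^{(1)}) has constant antidiagonals and support in the staircase: there exist nonnegative reals x_1,...,x_p such that x_{i,j}^{(1)} = x_{i+j−1} when i+j ≤ p+1 and x_{i,j}^{(1)} = 0 when i+j > p+1. -/
open Finset

namespace CRPoly

/-- Entry of a `p × q × r` real array, with 0-indexed `ℕ` indices and value `0`
out of range. -/
def ent {p q r : ℕ} (x : Fin p → Fin q → Fin r → ℝ) (i j k : ℕ) : ℝ :=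
  if hi : i < p then if hj : j < q then if hk : k < r then
    x ⟨i, hi⟩ ⟨j, hj⟩ ⟨k, hk⟩ else 0 else 0 else 0

/-- The (1-indexed) entry `b_{i,j}` of the `(pr) × q` matrix `X^col` obtained by
stacking the level matrices `X^{(r)}, …, X^{(1)}` vertically. -/
def bcol {p q r : ℕ} (x : Fin p → Fin q → Fin r → ℝ) (i j : ℕ) : ℝ :=
  ent x ((i - 1) % p) (j - 1) (r - 1 - (i - 1) / p)

/-- The (1-indexed) entry `c_{i,j}` of the `p × (qr)` matrix `X^row` obtained by
concatenating the level matrices `X^{(r)}, …, X^{(1)}` horizontally. -/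
def crow {p q r : ℕ} (x : Fin p → Fin q → Fin r → ℝ) (i j : ℕ) : ℝ :=
  ent x (i - 1) ((j - 1) % q) (r - 1 - (j - 1) / q)

/-- The column-row cone `CR(p,q,r)`: nonnegative `p × q × r` arrays satisfying the
vanishing conditions (C1), (R1) and the column inequalities (C2) and row
inequalities (R2) (all matrix indices 1-indexed, as in the paper). -/
def CRcone (p q r : ℕ) : Set (Fin p → Fin q → Fin r → ℝ) :=
  {x | (∀ i j k, 0 ≤ x i j k) ∧
    -- (C1)
    (∀ i j, 1 ≤ i → i ≤ p * r → 1 ≤ j → j ≤ q → p * r + 1 < i + j → bcol x i j = 0) ∧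
    -- (C2)
    (∀ j i, 1 ≤ j → j + 1 ≤ min (p * r) q → 2 ≤ i → i ≤ p * r + 1 - j →
      ∑ k ∈ Finset.Icc (i - 1) (p * r - j), bcol x k (j + 1) ≤
      ∑ k ∈ Finset.Icc i (p * r + 1 - j), bcol x k j) ∧
    -- (R1)
    (∀ i j, 1 ≤ i → i ≤ p → 1 ≤ j → j ≤ q * r → q * r + 1 < i + j → crow x i j = 0) ∧
    -- (R2)
    (∀ i j, 1 ≤ i → i + 1 ≤ min p (q * r) → 2 ≤ j → j ≤ q * r + 1 - i →
      ∑ l ∈ Finset.Icc (j - 1) (q * r - i), crow x (i + 1) l ≤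
      ∑ l ∈ Finset.Icc j (q * r + 1 - i), crow x i l)}

/-- The column-row polytope `CR(λ,μ;τ)`: elements of the cone `CR(p,q,r)` whose
1-marginals (plane sums) are `λ`, `μ` and `τ`. -/
def CRpoly (p q r : ℕ) (lam mu tau : ℕ → ℕ) : Set (Fin p → Fin q → Fin r → ℝ) :=
  {x | x ∈ CRcone p q r ∧
    (∀ i : Fin p, ∑ j, ∑ k, x i j k = (lam (i : ℕ) : ℝ)) ∧
    (∀ j : Fin q, ∑ i, ∑ k, x i j k = (mu (j : ℕ) : ℝ)) ∧
    (∀ k : Fin r, ∑ i, ∑ j, x i j k = (tau (k : ℕ) : ℝ))}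

lemma sum_Icc_add_right {M : Type*} [AddCommMonoid M] (f : ℕ → M) (a b c : ℕ) :
    ∑ k ∈ Icc (a + c) (b + c), f k = ∑ s ∈ Icc a b, f (s + c) := by
  rw [← map_add_right_Icc, sum_map]
  rfl

lemma sum_Icc_eq_left {M : Type*} [AddCommMonoid M] {f : ℕ → M} {a b : ℕ} (hab : a ≤ b)
    (hf : ∀ s, a < s → f s = 0) : ∑ s ∈ Icc a b, f s = f a :=
  sum_eq_single_of_mem a (mem_Icc.2 ⟨le_rfl, hab⟩) fun s hs hne =>
    hf s ((mem_Icc.1 hs).1.lt_of_ne' hne)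

/-- The conditions (C1), (C2) and (R2) restricted to the bottom block `X^{(1)}` of `X^col`
and the last block `X^{(1)}` of `X^row`, written for the 0-indexed level matrix `a`. -/
structure FirstLevelConditions (p q : ℕ) (a : ℕ → ℕ → ℝ) : Prop where
  eq_zero : ∀ i j, p ≤ i + j → a i j = 0
  col_tail_le : ∀ i j, i + j + 2 ≤ p → j + 2 ≤ q →
    ∑ s ∈ Icc i (p - j - 2), a s (j + 1) ≤ ∑ s ∈ Icc (i + 1) (p - j - 1), a s j
  row_tail_le : ∀ i j, i + 2 ≤ p → i + j + 2 ≤ q →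
    ∑ s ∈ Icc j (q - i - 2), a (i + 1) s ≤ ∑ s ∈ Icc (j + 1) (q - i - 1), a i s

namespace FirstLevelConditions

variable {p q : ℕ} {a : ℕ → ℕ → ℝ}

/- Downward induction on the antidiagonal `i + j`: once `a` is constant along all later
antidiagonals, the column and the row tail inequality at `(i, j)` each collapse to their first
term, and they give the two opposite inequalities between `a (i + 1) j` and `a i (j + 1)`. -/
theorem shift_eq (h : FirstLevelConditions p q a) (hpq : p ≤ q) (i j : ℕ) :
    a (i + 1) j = a i (j + 1) := by
  suffices ∀ m i j, p ≤ i + j + m → a (i + 1) j = a i (j + 1) from this p i j (by omega)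
  intro m
  induction m with
  | zero => intro i j hij; rw [h.eq_zero _ _ (by omega), h.eq_zero _ _ (by omega)]
  | succ m ih =>
    intro i j hij
    by_cases hlast : p ≤ i + j + 1
    · rw [h.eq_zero _ _ (by omega), h.eq_zero _ _ (by omega)]
    have hcol : 0 ≤ a (i + 1) j - a i (j + 1) := by
      have hc := h.col_tail_le i j (by omega) (by omega)
      rwa [show p - j - 1 = p - j - 2 + 1 by omega, sum_Icc_add_right, ← sub_nonneg,
        ← sum_sub_distrib, sum_Icc_eq_left (by omega)
          fun s hs => by rw [ih s j (by omega), sub_self]] at hc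
    have hrow : 0 ≤ a i (j + 1) - a (i + 1) j := by
      have hr := h.row_tail_le i j (by omega) (by omega)
      rwa [show q - i - 1 = q - i - 2 + 1 by omega, sum_Icc_add_right, ← sub_nonneg,
        ← sum_sub_distrib, sum_Icc_eq_left (by omega)
          fun s hs => by rw [ih i s (by omega), sub_self]] at hr
    linarith

theorem eq_zero_add (h : FirstLevelConditions p q a) (hpq : p ≤ q) (i j : ℕ) :
    a i j = a 0 (i + j) := by
  induction i generalizing j with
  | zero => rw [Nat.zero_add]
  | succ i ih => rw [h.shift_eq hpq, ih, Nat.add_right_comm, Nat.add_assoc]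

end FirstLevelConditions

lemma ent_nonneg {p q r : ℕ} {x : Fin p → Fin q → Fin r → ℝ} (hx : ∀ i j k, 0 ≤ x i j k)
    (i j k : ℕ) : 0 ≤ ent x i j k := by
  unfold ent
  split_ifs <;> first | exact hx _ _ _ | exact le_rfl

section FirstLevel

variable {p q r : ℕ} (x : Fin p → Fin q → Fin (r + 1) → ℝ)

lemma bcol_bottom {s : ℕ} (hs : s < p) (j : ℕ) : bcol x (p * r + s + 1) (j + 1) = ent x s j 0 := by
  have hp : 0 < p := by omega
  have hmod : (p * r + s) % p = s := by rw [Nat.mul_add_mod, Nat.mod_eq_of_lt hs]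
  have hdiv : (p * r + s) / p = r := by rw [Nat.mul_add_div hp, Nat.div_eq_of_lt hs, Nat.add_zero]
  simp [bcol, hmod, hdiv]

lemma crow_last (i : ℕ) {s : ℕ} (hs : s < q) : crow x (i + 1) (q * r + s + 1) = ent x i s 0 := by
  have hq : 0 < q := by omega
  have hmod : (q * r + s) % q = s := by rw [Nat.mul_add_mod, Nat.mod_eq_of_lt hs]
  have hdiv : (q * r + s) / q = r := by rw [Nat.mul_add_div hq, Nat.div_eq_of_lt hs, Nat.add_zero]
  simp [crow, hmod, hdiv]

lemma sum_bcol_bottom {u v : ℕ} (hv : v < p) (j : ℕ) :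
    ∑ k ∈ Icc (p * r + u + 1) (p * r + v + 1), bcol x k (j + 1) = ∑ s ∈ Icc u v, ent x s j 0 := by
  rw [Nat.add_right_comm _ u, Nat.add_right_comm _ v, Nat.add_comm _ u, Nat.add_comm _ v,
    sum_Icc_add_right]
  refine sum_congr rfl fun s hs => ?_
  rw [← bcol_bottom x (by have := (mem_Icc.1 hs).2; omega), Nat.add_comm s, Nat.add_right_comm]

lemma sum_crow_last (i : ℕ) {u v : ℕ} (hv : v < q) :
    ∑ l ∈ Icc (q * r + u + 1) (q * r + v + 1), crow x (i + 1) l = ∑ s ∈ Icc u v, ent x i s 0 := by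
  rw [Nat.add_right_comm _ u, Nat.add_right_comm _ v, Nat.add_comm _ u, Nat.add_comm _ v,
    sum_Icc_add_right]
  refine sum_congr rfl fun s hs => ?_
  rw [← crow_last x i (by have := (mem_Icc.1 hs).2; omega), Nat.add_comm s, Nat.add_right_comm]

variable {x}

theorem firstLevelConditions_of_mem_CRcone (hx : x ∈ CRcone p q (r + 1)) :
    FirstLevelConditions p q (fun i j => ent x i j 0) where
  eq_zero i j hij := by
    by_cases hi : i < p
    · by_cases hj : j < q
      · have h := hx.2.1 (p * r + i + 1) (j + 1) (by omega) (by rw [Nat.mul_succ]; omega)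
          (by omega) (by omega) (by rw [Nat.mul_succ]; omega)
        rwa [bcol_bottom x hi] at h
      · simp [ent, hj]
    · simp [ent, hi]
  col_tail_le i j hp hq := by
    have h := hx.2.2.1 (j + 1) (p * r + i + 2) (by omega) (by rw [Nat.mul_succ]; omega)
      (by omega) (by rw [Nat.mul_succ]; omega)
    rwa [Nat.mul_succ, show p * r + i + 2 - 1 = p * r + i + 1 by omega,
      show p * r + p - (j + 1) = p * r + (p - j - 2) + 1 by omega,
      show p * r + i + 2 = p * r + (i + 1) + 1 by omega,
      show p * r + p + 1 - (j + 1) = p * r + (p - j - 1) + 1 by omega,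
      sum_bcol_bottom x (by omega), sum_bcol_bottom x (by omega)] at h
  row_tail_le i j hp hq := by
    have h := hx.2.2.2.2 (i + 1) (q * r + j + 2) (by omega) (by rw [Nat.mul_succ]; omega)
      (by omega) (by rw [Nat.mul_succ]; omega)
    rwa [Nat.mul_succ, show q * r + j + 2 - 1 = q * r + j + 1 by omega,
      show q * r + q - (i + 1) = q * r + (q - i - 2) + 1 by omega,
      show q * r + j + 2 = q * r + (j + 1) + 1 by omega,
      show q * r + q + 1 - (i + 1) = q * r + (q - i - 1) + 1 by omega,
      sum_crow_last x _ (by omega), sum_crow_last x _ (by omega)] at h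

end FirstLevel

/-- if `p ≤ q`, the first level matrix `X^{(1)}` of any element of
`CR(p,q,r)` has constant antidiagonals supported on the staircase: there are
nonnegative reals `v 0, …, v (p-1)` with `x^{(1)}_{i,j} = v (i+j)` for
`i + j + 1 ≤ p` and `x^{(1)}_{i,j} = 0` otherwise (0-indexed). -/
theorem first_level_staircase (p q r : ℕ) (hpq : p ≤ q)
    (x : Fin p → Fin q → Fin r → ℝ) (hx : x ∈ CRcone p q r) :
    ∃ v : ℕ → ℝ, (∀ j, 0 ≤ v j) ∧
      ∀ i j, i < p → j < q →
        ent x i j 0 = if i + j + 1 ≤ p then v (i + j) else 0 := by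
  cases r with
  | zero => exact ⟨0, fun _ => le_rfl, fun i j _ _ => by simp [ent]⟩
  | succ r =>
    have h := firstLevelConditions_of_mem_CRcone hx
    refine ⟨fun n => ent x 0 n 0, fun n => ent_nonneg hx.1 0 n 0, fun i j _ _ => ?_⟩
    split_ifs with hij
    · exact h.eq_zero_add hpq i j
    · exact h.eq_zero i j (by omega)

end CRPoly
end

section
/- Let λ, μ be partitions of n of lengths p ≤ q, τ a composition of n of length r with 2 ≤ r and q ≤ pr. Then the column-row polytope CR(λ,μ;τ) has dimension at most pqr − C(p,2) − C(q,2) − (p+q+r) + 2. -/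
open Finset

namespace CRPoly

/-!
Differences of points of `CR(λ,μ;τ)` satisfy homogeneous linear conditions: the zeros forced
by (C1), vanishing plane sums, and constancy of the bottom level `X^{(1)}` along antidiagonals.
The last one comes from playing (R2) against (C2): by downward induction on the antidiagonal, each
shifted row and column inequality reduces to a single pair of neighbouring entries, in opposite
directions. On the subspace cut out by these conditions an array is determined by its entries off
`C(q,2)` cells forced to vanish, `C(p,2)` bottom-level cells copying the first row, and the
`p + q + r - 2` cells on the three axis lines through `(0, 0, r - 1)`, which the plane sums
determine.
-/

section Axes

variable {α β γ : Type*} [Fintype α] [Fintype β] [Fintype γ]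
  [DecidableEq α] [DecidableEq β] [DecidableEq γ]

def axes (a₀ : α) (b₀ : β) (c₀ : γ) : Finset (α × β × γ) :=
  univ.filter fun t => (t.2.1 = b₀ ∧ t.2.2 = c₀) ∨ (t.1 = a₀ ∧ t.2.2 = c₀) ∨ (t.1 = a₀ ∧ t.2.1 = b₀)

lemma card_axes (a₀ : α) (b₀ : β) (c₀ : γ) :
    #(axes a₀ b₀ c₀) + 2 = Fintype.card α + Fintype.card β + Fintype.card γ := by
  set A : Finset (α × β × γ) := univ ×ˢ {b₀} ×ˢ {c₀}
  set B : Finset (α × β × γ) := {a₀} ×ˢ univ ×ˢ {c₀}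
  set C : Finset (α × β × γ) := {a₀} ×ˢ {b₀} ×ˢ univ
  have hAB : A ∩ B = {(a₀, b₀, c₀)} := by ext ⟨a, b, c⟩; simp [A, B]; tauto
  have hABC : (A ∪ B) ∩ C = {(a₀, b₀, c₀)} := by ext ⟨a, b, c⟩; simp [A, B, C]; tauto
  have haxes : axes a₀ b₀ c₀ = A ∪ B ∪ C := by ext ⟨a, b, c⟩; simp [axes, A, B, C]; tauto
  have h₁ := card_union_add_card_inter A B
  have h₂ := card_union_add_card_inter (A ∪ B) C
  rw [hAB, card_singleton] at h₁
  rw [hABC, card_singleton] at h₂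
  have hA : #A = Fintype.card α := by simp [A]
  have hB : #B = Fintype.card β := by simp [B]
  have hC : #C = Fintype.card γ := by simp [C]
  rw [haxes]
  omega

lemma eq_zero_of_sum_eq_zero_of_support_axes {M : Type*} [AddCommMonoid M] {v : α → β → γ → M}
    {a₀ : α} {b₀ : β} {c₀ : γ}
    (h₁ : ∀ a, ∑ b, ∑ c, v a b c = 0) (h₂ : ∀ b, ∑ a, ∑ c, v a b c = 0)
    (h₃ : ∀ c, ∑ a, ∑ b, v a b c = 0)
    (hsupp : ∀ a b c, (a, b, c) ∉ axes a₀ b₀ c₀ → v a b c = 0) : v = 0 := by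
  have hA : ∀ a ≠ a₀, v a b₀ c₀ = 0 := by
    intro a ha
    rw [← h₁ a, ← Fintype.sum_prod_type', Fintype.sum_eq_single (b₀, c₀)]
    rintro ⟨b, c⟩ hbc
    exact hsupp _ _ _ (by simp_all [axes])
  have hB : ∀ b ≠ b₀, v a₀ b c₀ = 0 := by
    intro b hb
    rw [← h₂ b, ← Fintype.sum_prod_type' (fun a c => v a b c), Fintype.sum_eq_single (a₀, c₀)]
    rintro ⟨a, c⟩ hac
    exact hsupp _ _ _ (by simp_all [axes])
  have hC : ∀ c ≠ c₀, v a₀ b₀ c = 0 := by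
    intro c hc
    rw [← h₃ c, ← Fintype.sum_prod_type' (fun a b => v a b c), Fintype.sum_eq_single (a₀, b₀)]
    rintro ⟨a, b⟩ hab
    exact hsupp _ _ _ (by simp_all [axes])
  have hoff : ∀ a b c, (a, b, c) ≠ (a₀, b₀, c₀) → v a b c = 0 := by
    intro a b c hne
    by_cases hmem : (a, b, c) ∈ axes a₀ b₀ c₀
    · simp only [axes, mem_filter, mem_univ, true_and] at hmem
      rcases hmem with ⟨rfl, rfl⟩ | ⟨rfl, rfl⟩ | ⟨rfl, rfl⟩
      · exact hA a (by simpa using hne)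
      · exact hB b (by simpa using hne)
      · exact hC c (by simpa using hne)
    · exact hsupp a b c hmem
  -- The corner is the only possibly nonzero entry of its plane.
  have hcorner : v a₀ b₀ c₀ = 0 := by
    rw [← h₃ c₀, ← Fintype.sum_prod_type' (fun a b => v a b c₀), Fintype.sum_eq_single (a₀, b₀)]
    rintro ⟨a, b⟩ hab
    exact hoff _ _ _ (by simp_all)
  funext a b c
  by_cases h : (a, b, c) = (a₀, b₀, c₀)
  · simp_all
  · exact hoff a b c h

end Axes

lemma finrank_le_card_compl {K α β γ : Type*} [Field K] [Fintype α] [Fintype β] [Fintype γ]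
    [DecidableEq α] [DecidableEq β] [DecidableEq γ] {W : Submodule K (α → β → γ → K)}
    (s : Finset (α × β × γ)) (h : ∀ v ∈ W, (∀ t ∉ s, v t.1 t.2.1 t.2.2 = 0) → v = 0) :
    Module.finrank K W ≤ #sᶜ := by
  let L : W →ₗ[K] ((sᶜ : Finset (α × β × γ)) → K) :=
    { toFun := fun v t => (v : α → β → γ → K) t.1.1 t.1.2.1 t.1.2.2
      map_add' := fun _ _ => rfl
      map_smul' := fun _ _ => rfl }
  have hL : Function.Injective L := by
    rw [← LinearMap.ker_eq_bot, Submodule.eq_bot_iff]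
    intro v hv
    exact Subtype.ext <| h v v.2 fun t ht => congrFun hv ⟨t, mem_compl.2 ht⟩
  simpa only [Module.finrank_fintype_fun_eq_card, Fintype.card_coe] using
    LinearMap.finrank_le_finrank_of_injective hL

lemma card_sigma_range_range (n : ℕ) : #((range n).sigma fun b => range b) = n.choose 2 := by
  rw [card_sigma]
  simp [sum_range_id, Nat.choose_two_right]

/-- The combinatorial core of antidiagonal constancy, with `hrow` and `hcol` the shapes of (R2)
and (C2) on one level. -/
lemma eq_of_antidiagonal_sums {p q : ℕ} {y : ℕ → ℕ → ℝ} (hpq : p ≤ q)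
    (hzero : ∀ a b, p ≤ a + b → y a b = 0)
    (hrow : ∀ a b, a + 1 < p →
      ∑ t ∈ Ico b (q - a - 1), y (a + 1) t ≤ ∑ t ∈ Ico b (q - a - 1), y a (t + 1))
    (hcol : ∀ a c,
      ∑ s ∈ Ico a (p - c - 1), y s (c + 1) ≤ ∑ s ∈ Ico a (p - c - 1), y (s + 1) c)
    (a b : ℕ) : y (a + 1) b = y a (b + 1) := by
  suffices h : ∀ m a b, p ≤ a + b + 1 + m → y (a + 1) b = y a (b + 1) from
    h p a b (by omega)
  intro m
  induction m with
  | zero => intro a b h; rw [hzero _ _ (by omega), hzero _ _ (by omega)]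
  | succ m ih =>
    intro a b h
    by_cases hm : p ≤ a + b + 1 + m
    · exact ih a b hm
    -- Higher antidiagonals are constant, so both sums reduce to their first term.
    have hle : y (a + 1) b ≤ y a (b + 1) := by
      have := hrow a b (by omega)
      have hb : b < q - a - 1 := by omega
      rwa [sum_eq_sum_Ico_succ_bot hb, sum_eq_sum_Ico_succ_bot hb,
        sum_congr rfl fun t ht => ih a t (by simp at ht; omega), add_le_add_iff_right] at this
    have hge : y a (b + 1) ≤ y (a + 1) b := by
      have := hcol a b
      have ha : a < p - b - 1 := by omega
      rwa [sum_eq_sum_Ico_succ_bot ha, sum_eq_sum_Ico_succ_bot ha,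
        sum_congr rfl fun s hs => (ih s b (by simp at hs; omega)).symm,
        add_le_add_iff_right] at this
    exact le_antisymm hle hge

variable {p q r : ℕ} {x : Fin p → Fin q → Fin r → ℝ}

@[simp]
lemma ent_val (i : Fin p) (j : Fin q) (k : Fin r) : ent x i j k = x i j k := by
  simp [ent]

lemma bcol_eq_ent {a k : ℕ} (b : ℕ) (ha : a < p) (hk : k < r) :
    bcol x (a + (p * (r - 1 - k) + 1)) (b + 1) = ent x a b k := by
  have hp : 0 < p := by omega
  rw [bcol, show a + (p * (r - 1 - k) + 1) - 1 = a + p * (r - 1 - k) by omega,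
    Nat.add_mul_mod_self_left, Nat.add_mul_div_left _ _ hp, Nat.mod_eq_of_lt ha,
    Nat.div_eq_of_lt ha, Nat.add_sub_cancel]
  congr 1
  omega

lemma crow_eq_ent_bottom {b : ℕ} (a : ℕ) (hb : b < q) :
    crow x (a + 1) (b + (q * (r - 1) + 1)) = ent x a b 0 := by
  have hq : 0 < q := by omega
  rw [crow, show b + (q * (r - 1) + 1) - 1 = b + q * (r - 1) by omega,
    Nat.add_mul_mod_self_left, Nat.add_mul_div_left _ _ hq, Nat.mod_eq_of_lt hb,
    Nat.div_eq_of_lt hb, Nat.add_sub_cancel]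
  simp

section Cone

variable (hx : x ∈ CRcone p q r)
include hx

/-- (C1) in array coordinates. -/
lemma ent_eq_zero_of_le {a b k : ℕ} (h : p * (k + 1) ≤ a + b) : ent x a b k = 0 := by
  by_cases hpqr : a < p ∧ b < q ∧ k < r
  · obtain ⟨ha, hb, hk⟩ := hpqr
    have hsplit : p * (r - 1 - k) + p * (k + 1) = p * r := by
      rw [← Nat.mul_add]; congr 1; omega
    have hp : p ≤ p * (k + 1) := Nat.le_mul_of_pos_right p (Nat.succ_pos k)
    have := hx.2.1 (a + (p * (r - 1 - k) + 1)) (b + 1) (by omega) (by omega) (by omega)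
      (by omega) (by omega)
    rwa [bcol_eq_ent b ha hk] at this
  · unfold ent
    split_ifs <;> simp_all

/-- (R2) on the bottom level `X^{(1)}`, shifted so that both sides run over the same range. -/
lemma sum_ent_bottom_succ_le (hpq : p ≤ q) (hr : 0 < r) {a : ℕ} (ha : a + 1 < p) (b : ℕ) :
    ∑ t ∈ Ico b (q - a - 1), ent x (a + 1) t 0 ≤ ∑ t ∈ Ico b (q - a - 1), ent x a (t + 1) 0 := by
  rcases le_or_gt (q - a - 1) b with hb | hb
  · simp [Ico_eq_empty_of_le hb]
  have hqr : q * (r - 1) + q = q * r := by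
    rw [← Nat.mul_add_one, Nat.sub_add_cancel hr]
  have key := hx.2.2.2.2 (a + 1) (q * (r - 1) + b + 2) (by omega)
    (le_min (by omega) (by omega)) (by omega) (by omega)
  rw [show Icc (q * (r - 1) + b + 2 - 1) (q * r - (a + 1))
      = Ico (b + (q * (r - 1) + 1)) (q - a - 1 + (q * (r - 1) + 1)) by ext; simp; omega,
    show Icc (q * (r - 1) + b + 2) (q * r + 1 - (a + 1))
      = Ico (b + (q * (r - 1) + 2)) (q - a - 1 + (q * (r - 1) + 2)) by ext; simp; omega,
    ← sum_Ico_add', ← sum_Ico_add'] at key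
  convert key using 1 <;> refine sum_congr rfl fun t ht => ?_ <;> rw [mem_Ico] at ht
  · exact (crow_eq_ent_bottom _ (by omega)).symm
  · rw [show t + (q * (r - 1) + 2) = t + 1 + (q * (r - 1) + 1) by omega]
    exact (crow_eq_ent_bottom _ (by omega)).symm

/-- (C2) on the bottom level `X^{(1)}`, shifted so that both sides run over the same range. -/
lemma sum_ent_bottom_le_succ (hpq : p ≤ q) (hr : 0 < r) (a c : ℕ) :
    ∑ s ∈ Ico a (p - c - 1), ent x s (c + 1) 0 ≤ ∑ s ∈ Ico a (p - c - 1), ent x (s + 1) c 0 := by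
  rcases le_or_gt (p - c - 1) a with ha | ha
  · simp [Ico_eq_empty_of_le ha]
  have hpr : p * (r - 1) + p = p * r := by
    rw [← Nat.mul_add_one, Nat.sub_add_cancel hr]
  have key := hx.2.2.1 (c + 1) (p * (r - 1) + a + 2) (by omega)
    (le_min (by omega) (by omega)) (by omega) (by omega)
  rw [show Icc (p * (r - 1) + a + 2 - 1) (p * r - (c + 1))
      = Ico (a + (p * (r - 1) + 1)) (p - c - 1 + (p * (r - 1) + 1)) by ext; simp; omega,
    show Icc (p * (r - 1) + a + 2) (p * r + 1 - (c + 1))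
      = Ico (a + (p * (r - 1) + 2)) (p - c - 1 + (p * (r - 1) + 2)) by ext; simp; omega,
    ← sum_Ico_add', ← sum_Ico_add'] at key
  convert key using 1 <;> refine sum_congr rfl fun s hs => ?_ <;> rw [mem_Ico] at hs
  · simpa using (bcol_eq_ent (x := x) (c + 1) (by omega) hr).symm
  · rw [show s + (p * (r - 1) + 2) = s + 1 + (p * (r - 1) + 1) by omega]
    simpa using (bcol_eq_ent (x := x) c (by omega) hr).symm

end Cone

lemma ent_bottom_eq_of_add_eq (hx : x ∈ CRcone p q r) (hpq : p ≤ q) {a b a' b' : ℕ}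
    (h : a + b = a' + b') : ent x a b 0 = ent x a' b' 0 := by
  rcases Nat.eq_zero_or_pos r with rfl | hr
  · simp [ent]
  have hswap := eq_of_antidiagonal_sums (y := fun a b => ent x a b 0) hpq
    (fun a b hab => ent_eq_zero_of_le hx (by omega))
    (fun a b ha => sum_ent_bottom_succ_le hx hpq hr ha b) (sum_ent_bottom_le_succ hx hpq hr)
  have hfirst : ∀ a b, ent x a b 0 = ent x 0 (a + b) 0 := by
    intro a
    induction a with
    | zero => simp
    | succ a ih => intro b; rw [hswap, ih]; ring_nf
  rw [hfirst, h, ← hfirst]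

def CRlin (p q r : ℕ) : Submodule ℝ (Fin p → Fin q → Fin r → ℝ) where
  carrier := {v |
    (∀ (i : Fin p) (j : Fin q) (k : Fin r), p * ((k : ℕ) + 1) ≤ (i : ℕ) + j → v i j k = 0) ∧
    (∀ (i i' : Fin p) (j j' : Fin q) (k : Fin r), (k : ℕ) = 0 → (i : ℕ) + j = i' + j' →
      v i j k = v i' j' k) ∧
    (∀ i, ∑ j, ∑ k, v i j k = 0) ∧ (∀ j, ∑ i, ∑ k, v i j k = 0) ∧ (∀ k, ∑ i, ∑ j, v i j k = 0)}
  add_mem' := by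
    rintro v w ⟨hv₁, hv₂, hv₃, hv₄, hv₅⟩ ⟨hw₁, hw₂, hw₃, hw₄, hw₅⟩
    refine ⟨fun i j k h => ?_, fun i i' j j' k hk h => ?_, fun i => ?_, fun j => ?_, fun k => ?_⟩
    · simp [hv₁ i j k h, hw₁ i j k h]
    · simp [hv₂ i i' j j' k hk h, hw₂ i i' j j' k hk h]
    all_goals simp [sum_add_distrib, *]
  zero_mem' := by simp
  smul_mem' := by
    rintro c v ⟨hv₁, hv₂, hv₃, hv₄, hv₅⟩
    refine ⟨fun i j k h => ?_, fun i i' j j' k hk h => ?_, fun i => ?_, fun j => ?_, fun k => ?_⟩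
    · simp [hv₁ i j k h]
    · simp [hv₂ i i' j j' k hk h]
    all_goals simp [← mul_sum, *]

lemma vectorSpan_CRpoly_le_CRlin (hpq : p ≤ q) (lam mu tau : ℕ → ℕ) :
    vectorSpan ℝ (CRpoly p q r lam mu tau) ≤ CRlin p q r := by
  rw [vectorSpan_def, Submodule.span_le]
  rintro _ ⟨x, ⟨hx, hx₁, hx₂, hx₃⟩, y, ⟨hy, hy₁, hy₂, hy₃⟩, rfl⟩
  refine ⟨fun i j k h => ?_, fun i i' j j' k hk h => ?_, fun i => ?_, fun j => ?_, fun k => ?_⟩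
  · have hx0 := ent_eq_zero_of_le hx h
    have hy0 := ent_eq_zero_of_le hy h
    simp_all
  · have hxk : x i j k = x i' j' k := by
      simpa only [← hk, ent_val] using ent_bottom_eq_of_add_eq hx hpq h
    have hyk : y i j k = y i' j' k := by
      simpa only [← hk, ent_val] using ent_bottom_eq_of_add_eq hy hpq h
    simp [hxk, hyk]
  all_goals simp [sum_sub_distrib, *]

/-- The cells forced to vanish by (C1). -/
def zeroCells (p q r : ℕ) : Finset (Fin p × Fin q × Fin r) :=
  univ.filter fun t => p * ((t.2.2 : ℕ) + 1) ≤ (t.1 : ℕ) + t.2.1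

def diagCells (p q r : ℕ) : Finset (Fin p × Fin q × Fin r) :=
  univ.filter fun t => (t.2.2 : ℕ) = 0 ∧ 1 ≤ (t.1 : ℕ) ∧ (t.1 : ℕ) + t.2.1 < p

lemma card_zeroCells (hqpr : q ≤ p * r) : q.choose 2 ≤ #(zeroCells p q r) := by
  rw [← card_sigma_range_range]
  refine card_le_card_of_surjOn (fun t => ⟨(t.2.1 : ℕ), p * t.2.2 + (p - 1 - t.1)⟩) ?_
  rintro ⟨b, s⟩ hbs
  simp only [coe_sigma, Set.mem_sigma_iff, coe_range, Set.mem_Iio] at hbs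
  have hp : 0 < p := Nat.pos_of_mul_pos_right (by omega : 0 < p * r)
  have hs := Nat.div_add_mod s p
  have hsp := Nat.mod_lt s hp
  have hsr : s / p < r := Nat.div_lt_of_lt_mul (by omega)
  refine ⟨(⟨p - 1 - s % p, by omega⟩, ⟨b, by omega⟩, ⟨s / p, hsr⟩), ?_, ?_⟩
  · simp only [mem_coe, zeroCells, mem_filter, mem_univ, true_and]
    rw [Nat.mul_add_one]
    omega
  · simp only [Sigma.mk.injEq, heq_eq_eq, true_and]
    omega

lemma card_diagCells (hpq : p ≤ q) (hr : 0 < r) : p.choose 2 ≤ #(diagCells p q r) := by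
  rw [← card_sigma_range_range]
  refine card_le_card_of_surjOn (fun t => ⟨(t.1 : ℕ) + t.2.1, (t.1 : ℕ) - 1⟩) ?_
  rintro ⟨d, s⟩ hds
  simp only [coe_sigma, Set.mem_sigma_iff, coe_range, Set.mem_Iio] at hds
  refine ⟨(⟨s + 1, by omega⟩, ⟨d - s - 1, by omega⟩, ⟨0, hr⟩), ?_, ?_⟩
  · simp only [mem_coe, diagCells, mem_filter, mem_univ, true_and]
    omega
  · simp only [Sigma.mk.injEq, heq_eq_eq]
    omega

section Pivots

variable [NeZero p] [NeZero q] [NeZero r]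

def pivots (p q r : ℕ) [NeZero p] [NeZero q] [NeZero r] : Finset (Fin p × Fin q × Fin r) :=
  zeroCells p q r ∪ diagCells p q r ∪ axes 0 0 ⊤

lemma card_pivots (hpq : p ≤ q) (hqpr : q ≤ p * r) (hr : 2 ≤ r) :
    q.choose 2 + p.choose 2 + (p + q + r) ≤ #(pivots p q r) + 2 := by
  have hp : 0 < p := Nat.pos_of_neZero p
  have hZD : Disjoint (zeroCells p q r) (diagCells p q r) := by
    refine disjoint_left.2 fun t hZ hD => ?_
    simp only [zeroCells, diagCells, mem_filter, mem_univ, true_and] at hZ hD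
    rw [hD.1] at hZ
    omega
  have hZDL : Disjoint (zeroCells p q r ∪ diagCells p q r) (axes 0 0 ⊤) := by
    refine disjoint_left.2 fun t hZD hL => ?_
    simp only [zeroCells, diagCells, axes, mem_union, mem_filter, mem_univ, true_and,
      Fin.ext_iff, Fin.val_zero, Fin.val_top] at hZD hL
    have := t.1.isLt
    have := t.2.1.isLt
    have hk : p ≤ p * ((t.2.2 : ℕ) + 1) := Nat.le_mul_of_pos_right p (Nat.succ_pos _)
    rcases hL with ⟨h₁, h₂⟩ | ⟨h₁, h₂⟩ | ⟨h₁, h₂⟩ <;>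
      simp only [h₁, h₂, Nat.sub_add_cancel (by omega : 1 ≤ r)] at hZD hk <;> omega
  rw [pivots, card_union_of_disjoint hZDL, card_union_of_disjoint hZD]
  have hL := card_axes (0 : Fin p) (0 : Fin q) (⊤ : Fin r)
  simp only [Fintype.card_fin] at hL
  have hZ := card_zeroCells hqpr
  have hD := card_diagCells hpq (by omega : 0 < r)
  omega

/-- Zero cells vanish by definition, diagonal cells copy a first-row entry `(0, d, 0)` that is
not a pivot, and what is left lies on the axes through `(0, 0, ⊤)`, where the plane sums kill it. -/
lemma eq_zero_of_mem_CRlin (hpq : p ≤ q) (hr : 2 ≤ r) {v : Fin p → Fin q → Fin r → ℝ}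
    (hv : v ∈ CRlin p q r) (hoff : ∀ t ∉ pivots p q r, v t.1 t.2.1 t.2.2 = 0) : v = 0 := by
  obtain ⟨hzero, hdiag, h₁, h₂, h₃⟩ := hv
  have hoff' : ∀ i j k, (i, j, k) ∉ diagCells p q r → (i, j, k) ∉ axes 0 0 ⊤ → v i j k = 0 := by
    intro i j k hD hL
    by_cases hZ : (i, j, k) ∈ zeroCells p q r
    · exact hzero i j k (by simpa [zeroCells] using hZ)
    · exact hoff (i, j, k) (by simp [pivots, hZ, hD, hL])
  refine eq_zero_of_sum_eq_zero_of_support_axes (a₀ := 0) (b₀ := 0) (c₀ := ⊤) h₁ h₂ h₃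
    fun i j k hL => ?_
  by_cases hD : (i, j, k) ∈ diagCells p q r
  · simp only [diagCells, mem_filter, mem_univ, true_and] at hD
    rw [hdiag i 0 j ⟨i + j, by omega⟩ k hD.1 (by simp)]
    apply hoff'
    · simp [diagCells]
    · simp only [axes, mem_filter, mem_univ, true_and, Fin.ext_iff, Fin.val_zero, Fin.val_top,
        hD.1]
      omega
  · exact hoff' i j k hD hL

end Pivots

theorem dim_CRpoly_le_general (n p q r : ℕ) (lam mu tau : ℕ → ℕ)
    (htaulen : (∀ k, k < r → 0 < tau k) ∧ ∀ k, r ≤ k → tau k = 0)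
    (hlamsize : ∑ i ∈ Finset.range p, lam i = n)
    (htausize : ∑ k ∈ Finset.range r, tau k = n)
    (hr2 : 2 ≤ r) (hpq : p ≤ q) (hqpr : q ≤ p * r) :
    (Module.finrank ℝ ((affineSpan ℝ (CRpoly p q r lam mu tau)).direction) : ℤ) ≤
      (p * q * r : ℤ) - (Nat.choose p 2 : ℤ) - (Nat.choose q 2 : ℤ)
        - (p + q + r : ℤ) + 2 := by
  have hp : p ≠ 0 := by
    rintro rfl
    have hn : n = 0 := by simpa using hlamsize.symm
    have hτ₀ := htaulen.1 0 (by omega)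
    have hτ₀n : tau 0 ≤ n :=
      htausize ▸ single_le_sum (fun _ _ => Nat.zero_le _) (mem_range.2 (by omega))
    omega
  have : NeZero p := ⟨hp⟩
  have : NeZero q := ⟨by omega⟩
  have : NeZero r := ⟨by omega⟩
  have hdim : Module.finrank ℝ (affineSpan ℝ (CRpoly p q r lam mu tau)).direction
      ≤ #(pivots p q r)ᶜ := by
    rw [direction_affineSpan]
    exact (Submodule.finrank_mono (vectorSpan_CRpoly_le_CRlin hpq lam mu tau)).trans
      (finrank_le_card_compl _ fun v hv => eq_zero_of_mem_CRlin hpq hr2 hv)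
  have hpiv := card_pivots hpq hqpr hr2
  rw [card_compl, Fintype.card_prod, Fintype.card_prod, Fintype.card_fin, Fintype.card_fin,
    Fintype.card_fin] at hdim
  have hle := card_le_univ (pivots p q r)
  simp only [Fintype.card_prod, Fintype.card_fin] at hle
  zify [hle] at hdim hpiv
  linarith

/-- for partitions `λ, μ` of `n` of lengths `p ≤ q` and a composition
`τ` of `n` of length `r` with `2 ≤ r` and `q ≤ pr`, the column-row polytope
`CR(λ,μ;τ)` has dimension at most `pqr − C(p,2) − C(q,2) − (p+q+r) + 2`. -/
theorem dim_CRpoly_le (n p q r : ℕ) (lam mu tau : ℕ → ℕ)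
    (hlamdec : ∀ i j, i ≤ j → lam j ≤ lam i)
    (hlamlen : (∀ i, i < p → 0 < lam i) ∧ ∀ i, p ≤ i → lam i = 0)
    (hmudec : ∀ i j, i ≤ j → mu j ≤ mu i)
    (hmulen : (∀ j, j < q → 0 < mu j) ∧ ∀ j, q ≤ j → mu j = 0)
    (htaulen : (∀ k, k < r → 0 < tau k) ∧ ∀ k, r ≤ k → tau k = 0)
    (hlamsize : ∑ i ∈ Finset.range p, lam i = n)
    (hmusize : ∑ j ∈ Finset.range q, mu j = n)
    (htausize : ∑ k ∈ Finset.range r, tau k = n)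
    (hr2 : 2 ≤ r) (hpq : p ≤ q) (hqpr : q ≤ p * r) :
    (Module.finrank ℝ ((affineSpan ℝ (CRpoly p q r lam mu tau)).direction) : ℤ) ≤
      (p * q * r : ℤ) - (Nat.choose p 2 : ℤ) - (Nat.choose q 2 : ℤ)
        - (p + q + r : ℤ) + 2 :=
  dim_CRpoly_le_general n p q r lam mu tau htaulen hlamsize htausize hr2 hpq hqpr

end CRPoly
end
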